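/- Let r ≥ 2 be a natural number and let G be a finite simple connected graph with at least 3 vertices such that for every vertex v the punctured ball at v (for parameter r) is connected (i.e., G has no r-local cutvertex). Then G is 2-connected; that is, for every vertex v of G, the graph G − v obtained by deleting v is connected. -/

import Mathlib

open SimpleGraph

/-- The ball of radius `r/2` around `v`: vertices at distance at most `⌊r/2⌋` from `v`,
with all edges of `G` between such vertices except, when `r` is even, edges joining two
vertices both at distance exactly `r/2` from `v`. -/
def ballSubgraph {V : Type*} (G : SimpleGraph V) (r : ℕ) (v : V) : G.Subgraph where
  verts := {w | G.Reachable v w ∧ G.dist v w ≤ r / 2}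
  Adj x y := G.Adj x y ∧ (G.Reachable v x ∧ G.dist v x ≤ r / 2) ∧
      (G.Reachable v y ∧ G.dist v y ≤ r / 2) ∧
      ¬(Even r ∧ 2 * G.dist v x = r ∧ 2 * G.dist v y = r)
  adj_sub h := h.1
  edge_vert h := h.2.1
  symm := by
    refine ⟨fun x y h => ?_⟩
    exact ⟨h.1.symm, h.2.2.1, h.2.1, by tauto⟩

/-- The punctured ball at `v` for parameter `r`: the ball `B_{r/2}(v)` with `v` deleted. -/
def puncturedBall {V : Type*} (G : SimpleGraph V) (r : ℕ) (v : V) : G.Subgraph :=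
  (ballSubgraph G r v).deleteVerts {v}

/-!
Deleting `v` from a connected graph leaves it connected as soon as the neighbours of `v`
stay mutually reachable: a walk of `G` through `v` can be rerouted around `v` between the
neighbours it visits just before and after `v`. For `r ≥ 2` the punctured ball at `v`
contains every neighbour of `v` and lives inside `G - v`, so its connectivity provides
exactly these detours.
-/

namespace SimpleGraph

variable {V : Type*} {G : SimpleGraph V}

lemma mem_deleteVerts_top_singleton {v w : V} :
    w ∈ ((⊤ : G.Subgraph).deleteVerts {v}).verts ↔ w ≠ v := by
  simp

theorem preconnected_deleteVerts_singleton (hG : G.Preconnected) {v u : V} (hu : G.Adj v u)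
    (hnbr : ∀ w (hw : G.Adj v w), ((⊤ : G.Subgraph).deleteVerts {v}).coe.Reachable
      ⟨u, mem_deleteVerts_top_singleton.2 hu.ne'⟩
      ⟨w, mem_deleteVerts_top_singleton.2 hw.ne'⟩) :
    ((⊤ : G.Subgraph).deleteVerts {v}).Preconnected := by
  classical
  set H := (⊤ : G.Subgraph).deleteVerts {v}
  -- Send `v` to its neighbour `u`; every edge of `G` then becomes a reachable pair in `G - v`.
  let f : V → H.verts := fun x =>
    if hx : x = v then ⟨u, mem_deleteVerts_top_singleton.2 hu.ne'⟩
    else ⟨x, mem_deleteVerts_top_singleton.2 hx⟩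
  have hf_ne : ∀ x (hx : x ≠ v), f x = ⟨x, mem_deleteVerts_top_singleton.2 hx⟩ :=
    fun _ hx => dif_neg hx
  have hf_adj : ∀ {x y}, G.Adj x y → H.coe.Reachable (f x) (f y) := by
    intro x y hxy
    by_cases hx : x = v
    · subst hx
      rw [hf_ne y hxy.ne', show f x = _ from dif_pos rfl]
      exact hnbr y hxy
    by_cases hy : y = v
    · subst hy
      rw [hf_ne x hxy.ne, show f y = _ from dif_pos rfl]
      exact (hnbr x hxy.symm).symm
    rw [hf_ne x hx, hf_ne y hy]
    exact (Subgraph.Adj.coe (by simp [H, hx, hy, hxy])).reachable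
  have hf_walk : ∀ {x y} (p : G.Walk x y), H.coe.Reachable (f x) (f y) := by
    intro x y p
    induction p with
    | nil => rfl
    | cons h _ ih => exact (hf_adj h).trans ih
  rw [Subgraph.preconnected_iff]
  rintro ⟨x, hx⟩ ⟨y, hy⟩
  have h := hf_walk (hG x y).some
  rwa [hf_ne x (mem_deleteVerts_top_singleton.1 hx),
    hf_ne y (mem_deleteVerts_top_singleton.1 hy)] at h

lemma puncturedBall_le_deleteVerts (r : ℕ) (v : V) :
    puncturedBall G r v ≤ (⊤ : G.Subgraph).deleteVerts {v} :=
  Subgraph.deleteVerts_mono le_top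

lemma mem_puncturedBall_verts_of_adj {r : ℕ} (hr : 2 ≤ r) {v w : V} (hw : G.Adj v w) :
    w ∈ (puncturedBall G r v).verts := by
  refine ⟨⟨hw.reachable, ?_⟩, by simpa using hw.ne'⟩
  have : G.dist v w ≤ 1 := by simpa using dist_le hw.toWalk
  omega

end SimpleGraph

theorem two_connected_of_no_local_cutvertex_general
    {V : Type*} [Fintype V] (r : ℕ) (hr : 2 ≤ r) (G : SimpleGraph V)
    (hG : G.Connected) (hcard : 3 ≤ Fintype.card V)
    (hloc : ∀ v : V, (puncturedBall G r v).Connected) :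
    ∀ v : V, ((⊤ : G.Subgraph).deleteVerts {v}).Connected := by
  intro v
  have : Nontrivial V := Fintype.one_lt_card_iff_nontrivial.1 (by omega)
  obtain ⟨u, hu⟩ := hG.preconnected.exists_adj_of_nontrivial v
  have hnbr : ∀ w (hw : G.Adj v w), ((⊤ : G.Subgraph).deleteVerts {v}).coe.Reachable
      ⟨u, mem_deleteVerts_top_singleton.2 hu.ne'⟩
      ⟨w, mem_deleteVerts_top_singleton.2 hw.ne'⟩ :=
    fun w hw => ((hloc v).preconnected ⟨u, mem_puncturedBall_verts_of_adj hr hu⟩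
      ⟨w, mem_puncturedBall_verts_of_adj hr hw⟩).map
        (Subgraph.inclusion (puncturedBall_le_deleteVerts r v))
  exact Subgraph.connected_iff.2 ⟨preconnected_deleteVerts_singleton hG.preconnected hu hnbr,
    u, mem_deleteVerts_top_singleton.2 hu.ne'⟩

theorem two_connected_of_no_local_cutvertex
    {V : Type*} [Fintype V] [DecidableEq V] (r : ℕ) (hr : 2 ≤ r) (G : SimpleGraph V)
    (hG : G.Connected) (hcard : 3 ≤ Fintype.card V)
    (hloc : ∀ v : V, (puncturedBall G r v).Connected) :
    ∀ v : V, ((⊤ : G.Subgraph).deleteVerts {v}).Connected :=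
  two_connected_of_no_local_cutvertex_general r hr G hG hcard hloc
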